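/- (Noiseless equal-power special case) Suppose y = Σ_{j∈U} A_j x_j (no noise) where all blocks A_i have orthonormal columns (so A_i^H A_i = I and σ_min(A_i) = 1), all used blocks have equal norm ‖x_j‖_2 = c > 0 for j ∈ U, |U| = K, and N is nonempty. If K < (1/2)(1/μ_B + 1), where μ_B = max_{i≠j} ‖A_i^H A_j‖_2 > 0, then min_{i∈N} ‖A_i^H y‖_2 < min_{j∈U} ‖A_j^H y‖_2, so the minimum-correlation criterion selects an unused block. -/

import Mathlib

open Matrix Finset
open scoped ComplexOrder

noncomputable section
open scoped Classical

def euclNorm {n : ℕ} (v : Fin n → ℂ) : ℝ := ‖(WithLp.equiv 2 (Fin n → ℂ)).symm v‖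

def snorm {m n : ℕ} (A : Matrix (Fin m) (Fin n) ℂ) : ℝ :=
  ‖LinearMap.toContinuousLinearMap (Matrix.toEuclideanLin A)‖

/-- The former `Matrix.PosSemidef.sqrt` (removed from Mathlib), with its old definition. -/
def psdSqrt {n : ℕ} {M : Matrix (Fin n) (Fin n) ℂ} (hA : M.PosSemidef) : Matrix (Fin n) (Fin n) ℂ :=
  (hA.1.eigenvectorUnitary : Matrix (Fin n) (Fin n) ℂ) *
    diagonal (((↑) : ℝ → ℂ) ∘ Real.sqrt ∘ hA.1.eigenvalues) *
    (star hA.1.eigenvectorUnitary : Matrix (Fin n) (Fin n) ℂ)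

def invSqrt {n : ℕ} (M : Matrix (Fin n) (Fin n) ℂ) : Matrix (Fin n) (Fin n) ℂ :=
  if h : M.PosSemidef then (psdSqrt h)⁻¹ else 0

def msqrt {n : ℕ} (M : Matrix (Fin n) (Fin n) ℂ) : Matrix (Fin n) (Fin n) ℂ :=
  if h : M.PosSemidef then psdSqrt h else 0

/-- normalized correlation ‖(AᴴA)^{-1/2} Aᴴ r‖₂ -/
def ncorr {m k : ℕ} (A : Matrix (Fin m) (Fin k) ℂ) (r : Fin m → ℂ) : ℝ :=
  euclNorm ((invSqrt (Aᴴ * A) * Aᴴ).mulVec r)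

end

lemma euclNorm_eq_lin {n : ℕ} (v : Fin n → ℂ) :
    euclNorm v = ‖(WithLp.linearEquiv 2 ℂ (Fin n → ℂ)).symm v‖ := rfl

lemma euclNorm_sum_le {ι : Type*} {n : ℕ} (s : Finset ι) (f : ι → Fin n → ℂ) :
    euclNorm (∑ i ∈ s, f i) ≤ ∑ i ∈ s, euclNorm (f i) := by
  simp only [euclNorm_eq_lin, map_sum]
  exact norm_sum_le _ _

lemma euclNorm_mulVec_le {m n : ℕ} (M : Matrix (Fin m) (Fin n) ℂ) (v : Fin n → ℂ) :
    euclNorm (M.mulVec v) ≤ snorm M * euclNorm v := by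
  have h := (LinearMap.toContinuousLinearMap (Matrix.toEuclideanLin M)).le_opNorm
    ((WithLp.equiv 2 (Fin n → ℂ)).symm v)
  simpa [euclNorm, snorm, Matrix.toEuclideanLin_apply, Matrix.toLin'_apply] using h

lemma euclNorm_add_ge {n : ℕ} (a b : Fin n → ℂ) :
    euclNorm a - euclNorm b ≤ euclNorm (a + b) := by
  have h : euclNorm a ≤ euclNorm (a + b) + euclNorm b := by
    simp only [euclNorm, WithLp.equiv_symm_apply, WithLp.toLp_add]
    calc ‖(WithLp.equiv 2 (Fin n → ℂ)).symm a‖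
        = ‖((WithLp.equiv 2 (Fin n → ℂ)).symm a + (WithLp.equiv 2 (Fin n → ℂ)).symm b)
            - (WithLp.equiv 2 (Fin n → ℂ)).symm b‖ := by rw [add_sub_cancel_right]
      _ ≤ _ := norm_sub_le _ _
  linarith

/-- noiseless equal-power special case. -/
theorem zdgroth_noiseless_equal_power
    {M B : ℕ} {Ni : Fin B → ℕ}
    (A : (i : Fin B) → Matrix (Fin M) (Fin (Ni i)) ℂ)
    (x : (i : Fin B) → Fin (Ni i) → ℂ)
    (U N : Finset (Fin B)) (K : ℕ)
    (horth : ∀ i, (A i)ᴴ * A i = 1)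
    (hcard : U.card = K)
    (hcompl : ∀ i, i ∈ N ↔ i ∉ U)
    (hN : N.Nonempty)
    (c : ℝ) (hc : 0 < c)
    (heq : ∀ j ∈ U, euclNorm (x j) = c)
    (μB : ℝ) (hμpos : 0 < μB)
    (hμ : ∀ i j, i ≠ j → snorm ((A i)ᴴ * A j) ≤ μB)
    (hK : (K : ℝ) < (1 / 2) * (1 / μB + 1))
    (y : Fin M → ℂ)
    (hy : y = ∑ j ∈ U, (A j).mulVec (x j)) :
    ∃ i ∈ N, ∀ j ∈ U, euclNorm ((A i)ᴴ.mulVec y) < euclNorm ((A j)ᴴ.mulVec y) := by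
  classical
  obtain ⟨i, hi⟩ := hN
  refine ⟨i, hi, ?_⟩
  intro j hj
  have hiU : i ∉ U := (hcompl i).mp hi
  -- expand correlations
  have hexp : ∀ l : Fin B, (A l)ᴴ.mulVec y = ∑ j' ∈ U, ((A l)ᴴ * A j').mulVec (x j') := by
    intro l
    rw [hy]
    calc (A l)ᴴ.mulVec (∑ j' ∈ U, (A j').mulVec (x j'))
        = (A l)ᴴ.mulVecLin (∑ j' ∈ U, (A j').mulVec (x j')) := rfl
      _ = ∑ j' ∈ U, (A l)ᴴ.mulVecLin ((A j').mulVec (x j')) := map_sum _ _ _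
      _ = ∑ j' ∈ U, ((A l)ᴴ * A j').mulVec (x j') := by
          simp [Matrix.mulVecLin_apply, Matrix.mulVec_mulVec]
  -- element bound
  have hterm : ∀ l j', l ≠ j' → j' ∈ U →
      euclNorm (((A l)ᴴ * A j').mulVec (x j')) ≤ μB * c := by
    intro l j' hne hj'
    calc euclNorm (((A l)ᴴ * A j').mulVec (x j'))
        ≤ snorm ((A l)ᴴ * A j') * euclNorm (x j') := euclNorm_mulVec_le _ _
      _ ≤ μB * c := by
          rw [heq j' hj']
          exact mul_le_mul_of_nonneg_right (hμ l j' hne) (le_of_lt hc)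
  -- upper bound for i
  have hupper : euclNorm ((A i)ᴴ.mulVec y) ≤ (K : ℝ) * (μB * c) := by
    rw [hexp i]
    calc euclNorm (∑ j' ∈ U, ((A i)ᴴ * A j').mulVec (x j'))
        ≤ ∑ j' ∈ U, euclNorm (((A i)ᴴ * A j').mulVec (x j')) := euclNorm_sum_le _ _
      _ ≤ ∑ _j' ∈ U, μB * c := by
          refine Finset.sum_le_sum fun j' hj' => hterm i j' (fun h => hiU (h ▸ hj')) hj'
      _ = (K : ℝ) * (μB * c) := by rw [Finset.sum_const, hcard, nsmul_eq_mul]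
  -- lower bound for j
  have hKpos : 1 ≤ K := by
    rw [← hcard]; exact Finset.card_pos.mpr ⟨j, hj⟩
  have hsplit : (A j)ᴴ.mulVec y = x j + ∑ j' ∈ U.erase j, ((A j)ᴴ * A j').mulVec (x j') := by
    rw [hexp j, ← Finset.add_sum_erase U _ hj, horth j, Matrix.one_mulVec]
  have hlower : c - ((K : ℝ) - 1) * (μB * c) ≤ euclNorm ((A j)ᴴ.mulVec y) := by
    rw [hsplit]
    have h1 : euclNorm (∑ j' ∈ U.erase j, ((A j)ᴴ * A j').mulVec (x j'))
        ≤ ((K : ℝ) - 1) * (μB * c) := by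
      calc euclNorm (∑ j' ∈ U.erase j, ((A j)ᴴ * A j').mulVec (x j'))
          ≤ ∑ j' ∈ U.erase j, euclNorm (((A j)ᴴ * A j').mulVec (x j')) := euclNorm_sum_le _ _
        _ ≤ ∑ _j' ∈ U.erase j, μB * c := by
            refine Finset.sum_le_sum fun j' hj' => ?_
            exact hterm j j' (fun h => (Finset.ne_of_mem_erase hj') h.symm)
              (Finset.mem_of_mem_erase hj')
        _ = ((U.erase j).card : ℝ) * (μB * c) := by rw [Finset.sum_const, nsmul_eq_mul]
        _ = ((K : ℝ) - 1) * (μB * c) := by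
            rw [Finset.card_erase_of_mem hj, hcard]
            congr 1
            rw [Nat.cast_sub hKpos, Nat.cast_one]
    have h2 := euclNorm_add_ge (x j) (∑ j' ∈ U.erase j, ((A j)ᴴ * A j').mulVec (x j'))
    rw [heq j hj] at h2
    linarith
  -- arithmetic
  have : (K : ℝ) * (μB * c) < c - ((K : ℝ) - 1) * (μB * c) := by
    have h2K : (2 * (K : ℝ) - 1) * μB < 1 := by
      have : (2 * (K : ℝ) - 1) < 1 / μB := by linarith
      calc (2 * (K : ℝ) - 1) * μB < (1 / μB) * μB :=
            mul_lt_mul_of_pos_right this hμpos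
        _ = 1 := by field_simp
    nlinarith
  linarith
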